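/- arXiv:1607.00743 — 4 statements merged into one kernel-verified Lean document; each statement's English description precedes it below -/
import Mathlib

section
/- Link between bootstrap consistency and mean-squared prediction error: Fix X ∈ ℝ^{n×p} and let β̂ : ℝⁿ → ℝ^p be any measurable estimator applied to Y = Xβ + ε. Let ê = Y − Xβ̂(Y) be its residuals, ē = (1/n)∑ᵢ êᵢ, and let F̂ be the empirical distribution placing mass 1/n at each êᵢ − ē. Let Fₙ be the empirical distribution placing mass 1/n at each εᵢ. Then for every n ≥ 1, E[ d₂²(F̂, F₀) ] ≤ 2·mspe(β̂|X) + 2·E[ d₂²(Fₙ, F₀) ] + 2σ²/n, where the expectations are over ε with i.i.d. coordinates of law F₀. -/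
open MeasureTheory Matrix
open scoped ENNReal NNReal

/-- Squared Mallows (Wasserstein-2) distance between two measures, defined as the
infimum over couplings of the expected squared distance (in `ℝ≥0∞`). -/
noncomputable def d2sq {E : Type*} [MeasurableSpace E] [NormedAddCommGroup E]
    (μ ν : Measure E) : ℝ≥0∞ :=
  ⨅ (π : Measure (E × E)) (_ : π.map Prod.fst = μ ∧ π.map Prod.snd = ν),
    ∫⁻ x, (‖x.1 - x.2‖₊ : ℝ≥0∞) ^ 2 ∂π

/-- The empirical distribution placing mass `1/n` at each `v i`. -/
noncomputable def empiricalMeasure {n : ℕ} (v : Fin n → ℝ) : Measure ℝ :=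
  (n : ℝ≥0∞)⁻¹ • ∑ i, Measure.dirac (v i)

/-! Any coupling `π` of `Fₙ(w)` with `F₀` disintegrates as `n⁻¹ ∑ᵢ δ_{w i} ⊗ κᵢ`; moving the
atoms `w i` to `v i` gives a coupling of `Fₙ(v)` with `F₀`, and
`(a - c)² ≤ 2 (a - b)² + 2 (b - c)²` yields `d₂²(Fₙ(v), F₀) ≤ (2/n) ‖v - w‖² + 2 d₂²(Fₙ(w), F₀)`.
For `v` the centred residuals and `w = ε`, `v - ε = -(a - ā + ε̄)` with `a = Xβ̂ - Xβ`, so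
`‖v - ε‖² ≤ ‖a‖² + n ε̄²`, and `E[ε̄²] = σ²/n`. -/

lemma coe_nnnorm_sq_eq_ofReal_sq (z : ℝ) : (‖z‖₊ : ℝ≥0∞) ^ 2 = ENNReal.ofReal (z ^ 2) := by
  rw [← enorm_eq_nnnorm, Real.enorm_eq_ofReal_abs, ← ENNReal.ofReal_pow (abs_nonneg z), sq_abs]

lemma d2sq_le_lintegral {μ ν : Measure ℝ} (π : Measure (ℝ × ℝ))
    (hfst : π.map Prod.fst = μ) (hsnd : π.map Prod.snd = ν) :
    d2sq μ ν ≤ ∫⁻ x, ENNReal.ofReal ((x.1 - x.2) ^ 2) ∂π := by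
  simp only [← coe_nnnorm_sq_eq_ofReal_sq]
  exact iInf₂_le π ⟨hfst, hsnd⟩

lemma lintegral_ofReal_sq_sub_le (a b : ℝ) (μ : Measure ℝ) [IsProbabilityMeasure μ] :
    ∫⁻ y, ENNReal.ofReal ((a - y) ^ 2) ∂μ
      ≤ 2 * ENNReal.ofReal ((a - b) ^ 2) + 2 * ∫⁻ y, ENNReal.ofReal ((b - y) ^ 2) ∂μ := by
  calc ∫⁻ y, ENNReal.ofReal ((a - y) ^ 2) ∂μ
      ≤ ∫⁻ y, 2 * ENNReal.ofReal ((a - b) ^ 2) + 2 * ENNReal.ofReal ((b - y) ^ 2) ∂μ := by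
        refine lintegral_mono fun y => ?_
        rw [← ENNReal.ofReal_ofNat, ← ENNReal.ofReal_mul zero_le_two,
          ← ENNReal.ofReal_mul zero_le_two, ← ENNReal.ofReal_add (by positivity) (by positivity)]
        exact ENNReal.ofReal_le_ofReal (by nlinarith [sq_nonneg (a - 2 * b + y)])
    _ = _ := by
        rw [lintegral_add_left measurable_const, lintegral_const, measure_univ, mul_one,
          lintegral_const_mul' _ _ ENNReal.ofNat_ne_top]

section coupling

variable {n : ℕ}

lemma lintegral_empiricalMeasure (v : Fin n → ℝ) (f : ℝ → ℝ≥0∞) :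
    ∫⁻ x, f x ∂(empiricalMeasure v) = (n : ℝ≥0∞)⁻¹ * ∑ i, f (v i) := by
  simp [empiricalMeasure, lintegral_smul_measure]

instance isProbabilityMeasure_empiricalMeasure [NeZero n] (v : Fin n → ℝ) :
    IsProbabilityMeasure (empiricalMeasure v) := by
  constructor
  simp [empiricalMeasure, ENNReal.inv_mul_cancel (NeZero.ne (n : ℝ≥0∞))]

noncomputable def gluedCoupling (v : Fin n → ℝ) (κ : Fin n → Measure ℝ) : Measure (ℝ × ℝ) :=
  (n : ℝ≥0∞)⁻¹ • ∑ i, (Measure.dirac (v i)).prod (κ i)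

variable (v : Fin n → ℝ) (κ : Fin n → Measure ℝ)

lemma lintegral_gluedCoupling [∀ i, SFinite (κ i)] {f : ℝ × ℝ → ℝ≥0∞} (hf : Measurable f) :
    ∫⁻ x, f x ∂(gluedCoupling v κ) = (n : ℝ≥0∞)⁻¹ * ∑ i, ∫⁻ y, f (v i, y) ∂(κ i) := by
  simp only [gluedCoupling, lintegral_smul_measure, lintegral_finsetSum_measure, smul_eq_mul,
    lintegral_prod _ hf.aemeasurable, lintegral_dirac]

lemma map_fst_gluedCoupling [∀ i, IsProbabilityMeasure (κ i)] :
    (gluedCoupling v κ).map Prod.fst = empiricalMeasure v := by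
  ext s hs
  simp [Measure.map_apply measurable_fst hs, gluedCoupling, empiricalMeasure,
    ← Set.prod_univ, Measure.prod_prod]

lemma map_snd_gluedCoupling [∀ i, SFinite (κ i)] :
    (gluedCoupling v κ).map Prod.snd = (n : ℝ≥0∞)⁻¹ • ∑ i, κ i := by
  ext s hs
  simp [Measure.map_apply measurable_snd hs, gluedCoupling, ← Set.univ_prod, Measure.prod_prod]

lemma eq_gluedCoupling_condKernel {π : Measure (ℝ × ℝ)} [IsFiniteMeasure π]
    (hπ : π.map Prod.fst = empiricalMeasure v) :
    π = gluedCoupling v (fun i => π.condKernel (v i)) := by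
  ext s hs
  have hfst : π.fst = empiricalMeasure v := hπ
  conv_lhs => rw [← π.disintegrate π.condKernel]
  rw [Measure.compProd_apply hs, hfst, lintegral_empiricalMeasure]
  simp [gluedCoupling, Measure.dirac_prod, Measure.map_apply measurable_prodMk_left hs]

lemma d2sq_empiricalMeasure_le_lintegral [NeZero n] (v w : Fin n → ℝ) {ν : Measure ℝ}
    {π : Measure (ℝ × ℝ)} (hfst : π.map Prod.fst = empiricalMeasure w)
    (hsnd : π.map Prod.snd = ν) :
    d2sq (empiricalMeasure v) ν ≤
      2 * ((n : ℝ≥0∞)⁻¹ * ∑ i, ENNReal.ofReal ((v i - w i) ^ 2))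
        + 2 * ∫⁻ x, ENNReal.ofReal ((x.1 - x.2) ^ 2) ∂π := by
  have hcost : Measurable fun x : ℝ × ℝ => ENNReal.ofReal ((x.1 - x.2) ^ 2) := by fun_prop
  have : IsFiniteMeasure π :=
    (Measure.isFiniteMeasure_map_iff measurable_fst.aemeasurable).1 (hfst ▸ inferInstance)
  set κ := fun i => π.condKernel (w i)
  have hπ : π = gluedCoupling w κ := eq_gluedCoupling_condKernel w hfst
  have hsnd' : (gluedCoupling v κ).map Prod.snd = ν := by
    rw [map_snd_gluedCoupling, ← map_snd_gluedCoupling w κ, ← hπ, hsnd]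
  calc d2sq (empiricalMeasure v) ν
      ≤ ∫⁻ x, ENNReal.ofReal ((x.1 - x.2) ^ 2) ∂(gluedCoupling v κ) :=
        d2sq_le_lintegral _ (map_fst_gluedCoupling v κ) hsnd'
    _ = (n : ℝ≥0∞)⁻¹ * ∑ i, ∫⁻ y, ENNReal.ofReal ((v i - y) ^ 2) ∂(κ i) :=
        lintegral_gluedCoupling v κ hcost
    _ ≤ (n : ℝ≥0∞)⁻¹ * ∑ i, (2 * ENNReal.ofReal ((v i - w i) ^ 2)
          + 2 * ∫⁻ y, ENNReal.ofReal ((w i - y) ^ 2) ∂(κ i)) := by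
        gcongr with i
        exact lintegral_ofReal_sq_sub_le _ _ _
    _ = 2 * ((n : ℝ≥0∞)⁻¹ * ∑ i, ENNReal.ofReal ((v i - w i) ^ 2))
          + 2 * ((n : ℝ≥0∞)⁻¹ * ∑ i, ∫⁻ y, ENNReal.ofReal ((w i - y) ^ 2) ∂(κ i)) := by
        rw [Finset.sum_add_distrib, ← Finset.mul_sum, ← Finset.mul_sum]
        ring
    _ = _ := by rw [← lintegral_gluedCoupling w κ hcost, ← hπ]

lemma d2sq_empiricalMeasure_le [NeZero n] (v w : Fin n → ℝ) (ν : Measure ℝ) :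
    d2sq (empiricalMeasure v) ν ≤
      2 * ((n : ℝ≥0∞)⁻¹ * ∑ i, ENNReal.ofReal ((v i - w i) ^ 2))
        + 2 * d2sq (empiricalMeasure w) ν :=
  calc d2sq (empiricalMeasure v) ν
      ≤ ⨅ (π : Measure (ℝ × ℝ)) (_ : π.map Prod.fst = empiricalMeasure w ∧ π.map Prod.snd = ν),
          2 * ((n : ℝ≥0∞)⁻¹ * ∑ i, ENNReal.ofReal ((v i - w i) ^ 2))
            + 2 * ∫⁻ x, ENNReal.ofReal ((x.1 - x.2) ^ 2) ∂π :=
        le_iInf₂ fun _ h => d2sq_empiricalMeasure_le_lintegral v w h.1 h.2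
    _ = _ := by
        simp only [d2sq, coe_nnnorm_sq_eq_ofReal_sq, ENNReal.mul_iInf_of_ne two_ne_zero
          ENNReal.ofNat_ne_top, ENNReal.add_iInf]

end coupling

section moments

open ProbabilityTheory

variable {μ : Measure ℝ} [IsProbabilityMeasure μ]

lemma memLp_two_eval_pi {ι : Type*} [Fintype ι] (h2 : MemLp id 2 μ) (i : ι) :
    MemLp (fun x : ι → ℝ => x i) 2 (Measure.pi fun _ : ι => μ) :=
  h2.comp_measurePreserving (measurePreserving_eval _ i)

lemma integral_sq_sum_pi {ι : Type*} [Fintype ι] (hmean : ∫ x, x ∂μ = 0) (h2 : MemLp id 2 μ) :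
    ∫ x, (∑ i, x i) ^ 2 ∂(Measure.pi fun _ : ι => μ) = Fintype.card ι * ∫ x, x ^ 2 ∂μ := by
  have hsum : (∑ i, fun x : ι → ℝ => x i) = fun x => ∑ i, x i :=
    funext fun x => Finset.sum_apply _ _ _
  have hmean_sum : ∫ x, ∑ i, x i ∂(Measure.pi fun _ : ι => μ) = 0 := by
    rw [integral_finsetSum _ fun i _ => (memLp_two_eval_pi h2 i).integrable one_le_two]
    refine Finset.sum_eq_zero fun i _ => ?_
    rw [integral_comp_eval (μ := fun _ : ι => μ) (f := fun y => y) aestronglyMeasurable_id, hmean]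
  have hvar := variance_sum_pi (μ := fun _ : ι => μ) (X := fun _ => id) fun _ => h2
  simp only [id, hsum] at hvar
  rw [variance_of_integral_eq_zero (by fun_prop) hmean_sum,
    variance_of_integral_eq_zero measurable_id.aemeasurable hmean] at hvar
  simpa using hvar

lemma lintegral_ofReal_sq_mean_pi {n : ℕ} [NeZero n] (hmean : ∫ x, x ∂μ = 0)
    (h2 : Integrable (fun x => x ^ 2) μ) :
    ∫⁻ x, ENNReal.ofReal (((∑ i, x i) / n) ^ 2) ∂(Measure.pi fun _ : Fin n => μ)
      = ENNReal.ofReal ((∫ x, x ^ 2 ∂μ) / n) := by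
  have h2' : MemLp id 2 μ := (memLp_two_iff_integrable_sq (by fun_prop)).2 h2
  have hsum : MemLp (fun x : Fin n → ℝ => ∑ i, x i) 2 (Measure.pi fun _ : Fin n => μ) :=
    memLp_finsetSum _ fun i _ => memLp_two_eval_pi h2' i
  simp_rw [div_pow]
  rw [← ofReal_integral_eq_lintegral_ofReal (hsum.integrable_sq.div_const _)
    (ae_of_all _ fun x => by positivity), integral_div, integral_sq_sum_pi hmean h2',
    Fintype.card_fin]
  have : (n : ℝ) ≠ 0 := NeZero.ne _
  field_simp

end moments

section residuals

lemma sum_sq_sub_mean_add_le {n : ℕ} (a : Fin n → ℝ) (t : ℝ) :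
    ∑ i, (a i - (∑ j, a j) / n + t) ^ 2 ≤ ∑ i, a i ^ 2 + n * t ^ 2 := by
  rcases Nat.eq_zero_or_pos n with rfl | hn
  · simp
  have hn' : (n : ℝ) ≠ 0 := by positivity
  have hexpand : ∑ i, (a i - (∑ j, a j) / n + t) ^ 2
      = ∑ i, a i ^ 2 + n * t ^ 2 - (∑ j, a j) ^ 2 / n := by
    simp only [add_sq, sub_sq, Finset.sum_add_distrib, Finset.sum_sub_distrib, ← Finset.mul_sum,
      ← Finset.sum_mul, Finset.sum_const, Finset.card_univ, Fintype.card_fin, nsmul_eq_mul]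
    field_simp
    ring
  rw [hexpand]
  have : 0 ≤ (∑ j, a j) ^ 2 / n := by positivity
  linarith

variable {n : ℕ} [NeZero n]

lemma d2sq_empiricalMeasure_centered_le (ε a : Fin n → ℝ) (ν : Measure ℝ) :
    d2sq (empiricalMeasure fun i => (ε - a) i - (∑ j, (ε - a) j) / n) ν
      ≤ 2 * ((n : ℝ≥0∞)⁻¹ * ENNReal.ofReal (∑ i, a i ^ 2))
        + 2 * ENNReal.ofReal (((∑ i, ε i) / n) ^ 2) + 2 * d2sq (empiricalMeasure ε) ν := by
  refine (d2sq_empiricalMeasure_le _ ε ν).trans ?_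
  gcongr ?_ + _
  rw [← mul_add]
  gcongr
  have hdiff : ∀ i, ((ε - a) i - (∑ j, (ε - a) j) / n - ε i) ^ 2
      = (a i - (∑ j, a j) / n + (∑ j, ε j) / n) ^ 2 := fun i => by
    simp only [Pi.sub_apply, Finset.sum_sub_distrib]
    ring
  have hn : (0 : ℝ) < n := Nat.cast_pos.2 (NeZero.pos n)
  simp only [hdiff, ← ENNReal.ofReal_sum_of_nonneg fun i _ => sq_nonneg _,
    ← ENNReal.div_eq_inv_mul, ← ENNReal.ofReal_natCast,
    ← ENNReal.ofReal_div_of_pos hn]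
  rw [← ENNReal.ofReal_add (by positivity) (by positivity)]
  refine ENNReal.ofReal_le_ofReal ?_
  rw [div_add' _ _ _ hn.ne', div_le_div_iff_of_pos_right hn]
  linarith [sum_sq_sub_mean_add_le a ((∑ j, ε j) / n)]

end residuals

theorem bootstrap_mspe_link_general
    {n p : ℕ} (hn : 1 ≤ n) (X : Matrix (Fin n) (Fin p) ℝ) (β : Fin p → ℝ)
    (betaHat : (Fin n → ℝ) → (Fin p → ℝ)) (hmeas : Measurable betaHat)
    (F₀ : Measure ℝ) [IsProbabilityMeasure F₀]
    (σ2 : ℝ)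
    (hmean : ∫ x, x ∂F₀ = 0) (hvar : ∫ x, x ^ 2 ∂F₀ = σ2)
    (hm2 : Integrable (fun x => x ^ 2) F₀) :
    (∫⁻ ε, d2sq
        (empiricalMeasure (fun i =>
          ((X *ᵥ β + ε) - X *ᵥ betaHat (X *ᵥ β + ε)) i
            - (∑ j, ((X *ᵥ β + ε) - X *ᵥ betaHat (X *ᵥ β + ε)) j) / n))
        F₀ ∂(Measure.pi fun _ : Fin n => F₀))
      ≤ 2 * ((n : ℝ≥0∞)⁻¹ *
            ∫⁻ ε, ENNReal.ofReal
              (∑ i, ((X *ᵥ betaHat (X *ᵥ β + ε)) i - (X *ᵥ β) i) ^ 2)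
              ∂(Measure.pi fun _ : Fin n => F₀))
        + 2 * (∫⁻ ε, d2sq (empiricalMeasure ε) F₀ ∂(Measure.pi fun _ : Fin n => F₀))
        + ENNReal.ofReal (2 * σ2 / n) := by
  have : NeZero n := ⟨by omega⟩
  have hresid : ∀ ε, X *ᵥ β + ε - X *ᵥ betaHat (X *ᵥ β + ε)
      = ε - (X *ᵥ betaHat (X *ᵥ β + ε) - X *ᵥ β) := fun ε => by abel
  calc _ ≤ ∫⁻ ε, 2 * ((n : ℝ≥0∞)⁻¹ *
            ENNReal.ofReal (∑ i, ((X *ᵥ betaHat (X *ᵥ β + ε)) i - (X *ᵥ β) i) ^ 2))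
          + 2 * ENNReal.ofReal (((∑ i, ε i) / n) ^ 2) + 2 * d2sq (empiricalMeasure ε) F₀
          ∂(Measure.pi fun _ : Fin n => F₀) := lintegral_mono fun ε => by
        have h := d2sq_empiricalMeasure_centered_le ε (X *ᵥ betaHat (X *ᵥ β + ε) - X *ᵥ β) F₀
        rwa [← hresid] at h
    _ = _ := by
      rw [lintegral_add_left (by fun_prop), lintegral_add_left (by fun_prop),
        lintegral_const_mul' _ _ ENNReal.ofNat_ne_top,
        lintegral_const_mul' _ _ ENNReal.ofNat_ne_top,
        lintegral_const_mul' _ _ ENNReal.ofNat_ne_top,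
        lintegral_const_mul' _ _ (ENNReal.inv_ne_top.2 (NeZero.ne _)),
        lintegral_ofReal_sq_mean_pi hmean hm2, hvar, mul_div_assoc,
        ENNReal.ofReal_mul zero_le_two, ENNReal.ofReal_ofNat]
      ring

/-- **Link between bootstrap consistency and mean-squared prediction error.**
For any measurable estimator `β̂` applied to `Y = Xβ + ε` with `ε` having i.i.d.
coordinates of law `F₀` (mean `0`, variance `σ²`), letting `F̂` be the empirical
distribution of the centered residuals `ê_i − ē` and `Fₙ` the empirical distribution
of the `ε_i`, one has
`E[d₂²(F̂,F₀)] ≤ 2·mspe(β̂|X) + 2·E[d₂²(Fₙ,F₀)] + 2σ²/n`. -/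
theorem bootstrap_mspe_link
    {n p : ℕ} (hn : 1 ≤ n) (X : Matrix (Fin n) (Fin p) ℝ) (β : Fin p → ℝ)
    (betaHat : (Fin n → ℝ) → (Fin p → ℝ)) (hmeas : Measurable betaHat)
    (F₀ : Measure ℝ) [IsProbabilityMeasure F₀]
    (σ2 : ℝ) (hσ2 : 0 < σ2)
    (hmean : ∫ x, x ∂F₀ = 0) (hvar : ∫ x, x ^ 2 ∂F₀ = σ2)
    (hm2 : Integrable (fun x => x ^ 2) F₀) :
    (∫⁻ ε, d2sq
        (empiricalMeasure (fun i =>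
          ((X *ᵥ β + ε) - X *ᵥ betaHat (X *ᵥ β + ε)) i
            - (∑ j, ((X *ᵥ β + ε) - X *ᵥ betaHat (X *ᵥ β + ε)) j) / n))
        F₀ ∂(Measure.pi fun _ : Fin n => F₀))
      ≤ 2 * ((n : ℝ≥0∞)⁻¹ *
            ∫⁻ ε, ENNReal.ofReal
              (∑ i, ((X *ᵥ betaHat (X *ᵥ β + ε)) i - (X *ᵥ β) i) ^ 2)
              ∂(Measure.pi fun _ : Fin n => F₀))
        + 2 * (∫⁻ ε, d2sq (empiricalMeasure ε) F₀ ∂(Measure.pi fun _ : Fin n => F₀))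
        + ENNReal.ofReal (2 * σ2 / n) :=
  bootstrap_mspe_link_general hn X β betaHat hmeas F₀ σ2 hmean hvar hm2
end

section
/- Ridge variance sum rate for fast eigenvalue decay: Let ν > 1/2, 0 < θ ≤ ν, and let l₁ ≥ l₂ ≥ … ≥ l_m > 0 with m = min(n,p) and k₃ n ≤ p ≤ k₄ n, satisfy κ₁ i^{-ν} ≤ l_i ≤ κ₂ i^{-ν} for all i = 1,…,m (constants κ₁, κ₂ > 0, 0 < k₃ ≤ k₄). Then there exist constants c, C > 0 and n₀ ≥ 1 depending only on (κ₁, κ₂, ν, θ, k₃, k₄) such that for all n ≥ n₀: c·n^{(θ−ν)/ν} ≤ (1/n)·∑_{i=1}^{m} ( l_i / (l_i + n^{-θ}) )² ≤ C·n^{(θ−ν)/ν}. -/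
/-!
Put `ρ = n^(-θ)` and `X = n^(θ/ν)`, so that the rate `n^((θ-ν)/ν)` is `X / n` and the claim is
that the sum is of order `X`. The eigenvalue bounds read `l i ≍ ρ (T / (i+1))^ν` with scale
`T = κ^(1/ν) X`. For the first `⌊T⌋` indices `l i ≥ ρ`, so each of these terms is at least `1/4`,
and `min(n,p) ≥ min(1,k₃) X` leaves room for all of them. Conversely every term is at most
`min(1, (T/(i+1))^(2ν))`; as `2ν > 1`, comparison with `∫_T^∞ x^(-2ν) dx` bounds the sum by `O(T)`.
-/

open Finset Real

lemma sum_range_natCast_add_rpow_neg_le {s : ℝ} (hs : 1 < s) {J : ℕ} (hJ : 1 ≤ J) (a : ℕ) :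
    ∑ k ∈ range a, ((J : ℝ) + (k + 1 : ℕ)) ^ (-s) ≤ (J : ℝ) ^ (1 - s) / (s - 1) := by
  have hJ0 : (0 : ℝ) < J := by exact_mod_cast hJ
  have hanti : AntitoneOn (fun x : ℝ => x ^ (-s)) (Set.Icc (J : ℝ) (J + a)) :=
    fun x hx y _ hxy => rpow_le_rpow_of_nonpos (hJ0.trans_le hx.1) hxy (by linarith)
  have hint : ∫ x in (J : ℝ)..J + a, x ^ (-s)
      = ((J : ℝ) ^ (1 - s) - (J + a : ℝ) ^ (1 - s)) / (s - 1) := by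
    have h0 : (0 : ℝ) ∉ Set.uIcc (J : ℝ) (J + a) := by
      rw [Set.uIcc_of_le (by simp)]; exact fun h => hJ0.not_ge h.1
    rw [integral_rpow (Or.inr ⟨by linarith, h0⟩), ← neg_div_neg_eq]
    ring_nf
  calc ∑ k ∈ range a, ((J : ℝ) + (k + 1 : ℕ)) ^ (-s)
      ≤ ((J : ℝ) ^ (1 - s) - (J + a : ℝ) ^ (1 - s)) / (s - 1) :=
        hint ▸ hanti.sum_le_integral
    _ ≤ (J : ℝ) ^ (1 - s) / (s - 1) := by
        gcongr
        exact sub_le_self _ (by positivity)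

lemma sum_range_min_one_div_rpow_le {s T : ℝ} (hs : 1 < s) (hT : 0 < T) (M : ℕ) :
    ∑ i ∈ range M, min 1 ((T / (i + 1)) ^ s) ≤ s / (s - 1) * T + 1 := by
  set J := ⌈T⌉₊
  have hJ : 1 ≤ J := Nat.one_le_iff_ne_zero.mpr (Nat.ceil_pos.mpr hT).ne'
  have hTJ : T ≤ J := Nat.le_ceil T
  set f : ℕ → ℝ := fun i => min 1 ((T / (i + 1)) ^ s)
  have hhead : ∑ i ∈ range J, f i ≤ T + 1 := calc
    ∑ i ∈ range J, f i ≤ J := by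
      simpa using sum_le_card_nsmul (range J) f 1 (fun i _ => min_le_left _ _)
    _ ≤ T + 1 := (Nat.ceil_lt_add_one hT.le).le
  have htail : ∑ k ∈ range M, f (J + k) ≤ T / (s - 1) := calc
    ∑ k ∈ range M, f (J + k) ≤ ∑ k ∈ range M, T ^ s * ((J : ℝ) + (k + 1 : ℕ)) ^ (-s) := by
      refine sum_le_sum fun k _ => (min_le_right _ _).trans_eq ?_
      rw [div_rpow hT.le (by positivity), rpow_neg (by positivity), div_eq_mul_inv]
      push_cast; ring_nf
    _ ≤ T ^ s * ((J : ℝ) ^ (1 - s) / (s - 1)) := by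
      rw [← mul_sum]; gcongr; exact sum_range_natCast_add_rpow_neg_le hs hJ _
    _ ≤ T ^ s * (T ^ (1 - s) / (s - 1)) := by
      have hs1 : 0 ≤ s - 1 := by linarith
      gcongr ?_ * (?_ / _)
      exact rpow_le_rpow_of_nonpos hT hTJ (by linarith)
    _ = T / (s - 1) := by
      rw [← mul_div_assoc, ← rpow_add hT]; simp
  calc ∑ i ∈ range M, f i ≤ ∑ i ∈ range (J + M), f i :=
        sum_le_sum_of_subset_of_nonneg (range_mono (Nat.le_add_left _ _))
          fun i _ _ => le_min zero_le_one (by positivity)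
    _ = ∑ i ∈ range J, f i + ∑ k ∈ range M, f (J + k) := sum_range_add f J M
    _ ≤ (T + 1) + T / (s - 1) := add_le_add hhead htail
    _ = s / (s - 1) * T + 1 := by
      have hs1 : s - 1 ≠ 0 := by linarith
      field_simp; ring

section RidgeRatio

variable {l ρ : ℝ}

lemma sq_div_add_le_min_one_sq {y : ℝ} (hl : 0 < l) (hρ : 0 < ρ) (h : l ≤ ρ * y) :
    (l / (l + ρ)) ^ 2 ≤ min 1 (y ^ 2) := by
  have h0 : 0 ≤ l / (l + ρ) := by positivity
  refine le_min (pow_le_one₀ h0 ((div_le_one (by positivity)).mpr (by linarith))) ?_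
  gcongr
  calc l / (l + ρ) ≤ l / ρ := div_le_div_of_nonneg_left hl.le hρ (by linarith)
    _ ≤ y := (div_le_iff₀' hρ).mpr h

lemma quarter_le_sq_div_add (hρ : 0 < ρ) (h : ρ ≤ l) : 1 / 4 ≤ (l / (l + ρ)) ^ 2 := by
  have hhalf : 1 / 2 ≤ l / (l + ρ) := by
    rw [le_div_iff₀ (by linarith)]; linarith
  nlinarith

end RidgeRatio

section RidgeSum

variable {m : ℕ} {ν ρ T : ℝ} (l : Fin m → ℝ)

lemma sum_sq_div_add_le (hν : 1 / 2 < ν) (hρ : 0 < ρ) (hT : 0 < T) (hl : ∀ i, 0 < l i)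
    (hlT : ∀ i : Fin m, l i ≤ ρ * (T / ((i : ℕ) + 1)) ^ ν) :
    ∑ i, (l i / (l i + ρ)) ^ 2 ≤ 2 * ν / (2 * ν - 1) * T + 1 := calc
  ∑ i, (l i / (l i + ρ)) ^ 2 ≤ ∑ i : Fin m, min 1 ((T / ((i : ℕ) + 1)) ^ (2 * ν)) := by
    refine sum_le_sum fun i _ => (sq_div_add_le_min_one_sq (hl i) hρ (hlT i)).trans_eq ?_
    rw [← rpow_natCast, ← rpow_mul (by positivity), mul_comm]; norm_num
  _ = ∑ i ∈ range m, min 1 ((T / (i + 1)) ^ (2 * ν)) :=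
    Fin.sum_univ_eq_sum_range (fun i => min 1 ((T / (i + 1)) ^ (2 * ν))) m
  _ ≤ 2 * ν / (2 * ν - 1) * T + 1 := sum_range_min_one_div_rpow_le (by linarith) hT m

lemma min_floor_div_four_le_sum_sq_div_add (hν : 0 ≤ ν) (hρ : 0 < ρ)
    (hlT : ∀ i : Fin m, ρ * (T / ((i : ℕ) + 1)) ^ ν ≤ l i) :
    ((min m ⌊T⌋₊ : ℕ) : ℝ) / 4 ≤ ∑ i, (l i / (l i + ρ)) ^ 2 := by
  set K := min m ⌊T⌋₊
  have hKm : K ≤ m := min_le_left _ _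
  have hterm : ∀ j : Fin K, 1 / 4 ≤ (l (Fin.castLE hKm j) / (l (Fin.castLE hKm j) + ρ)) ^ 2 := by
    intro j
    have hjT : ((j : ℕ) + 1 : ℝ) ≤ T := by
      exact_mod_cast (Nat.le_floor_iff' (Nat.succ_ne_zero _)).mp (j.2.trans_le (min_le_right _ _))
    have hone : 1 ≤ (T / ((j : ℕ) + 1)) ^ ν :=
      one_le_rpow ((one_le_div (by positivity)).mpr hjT) hν
    refine quarter_le_sq_div_add hρ (le_trans ?_ (hlT _))
    simpa using mul_le_mul_of_nonneg_left hone hρ.le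
  calc (K : ℝ) / 4 = ∑ _j : Fin K, (1 / 4 : ℝ) := by simp [div_eq_mul_inv]
    _ ≤ ∑ j : Fin K, (l (Fin.castLE hKm j) / (l (Fin.castLE hKm j) + ρ)) ^ 2 :=
      sum_le_sum fun j _ => hterm j
    _ = ∑ i ∈ univ.map (Fin.castLEEmb hKm), (l i / (l i + ρ)) ^ 2 := by simp
    _ ≤ ∑ i, (l i / (l i + ρ)) ^ 2 :=
      sum_le_sum_of_subset_of_nonneg (subset_univ _) fun _ _ _ => sq_nonneg _

end RidgeSum

lemma half_le_natFloor {x : ℝ} (hx : 1 ≤ x) : x / 2 ≤ ⌊x⌋₊ := by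
  have h1 : (1 : ℝ) ≤ ⌊x⌋₊ := by exact_mod_cast (Nat.one_le_floor_iff x).mpr hx
  linarith [Nat.lt_floor_add_one x]

lemma rpow_neg_mul_div_rpow_eq {κ ν θ n x : ℝ} (hκ : 0 < κ) (hν : ν ≠ 0) (hn : 0 < n)
    (hx : 0 < x) : n ^ (-θ) * (κ ^ (1 / ν) * n ^ (θ / ν) / x) ^ ν = κ * x ^ (-ν) := by
  rw [div_rpow (by positivity) hx.le, mul_rpow (by positivity) (by positivity),
    ← rpow_mul hκ.le, ← rpow_mul hn.le, one_div_mul_cancel hν, div_mul_cancel₀ _ hν, rpow_one,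
    rpow_neg hn.le, rpow_neg hx.le]
  field_simp

lemma rpow_sub_self_div_self {x : ℝ} (hx : 0 < x) (θ : ℝ) {ν : ℝ} (hν : ν ≠ 0) :
    x ^ ((θ - ν) / ν) = x⁻¹ * x ^ (θ / ν) := by
  rw [sub_div, div_self hν, rpow_sub_one hx.ne', div_eq_inv_mul]

lemma one_le_mul_rpow_div_of_inv_rpow_le {b θ ν x : ℝ} (hb : 0 < b) (hθ : 0 < θ) (hν : 0 < ν)
    (hx : b⁻¹ ^ (ν / θ) ≤ x) : 1 ≤ b * x ^ (θ / ν) := by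
  rw [← inv_le_iff_one_le_mul₀' hb, ← inv_div,
    le_rpow_inv_iff_of_pos (by positivity) ((rpow_nonneg (by positivity) _).trans hx)
      (by positivity)]
  exact hx

theorem ridge_variance_sum_rate_fast_decay_general
    (κ₁ κ₂ ν θ k₃ k₄ : ℝ)
    (hκ₁ : 0 < κ₁) (hκ₂ : 0 < κ₂) (hν : 1 / 2 < ν) (hθ : 0 < θ) (hθν : θ ≤ ν)
    (hk₃ : 0 < k₃) :
    ∃ c C : ℝ, 0 < c ∧ 0 < C ∧ ∃ n₀ : ℕ, 1 ≤ n₀ ∧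
      ∀ (n p : ℕ), n₀ ≤ n →
        k₃ * (n : ℝ) ≤ (p : ℝ) → (p : ℝ) ≤ k₄ * (n : ℝ) →
        ∀ (l : Fin (min n p) → ℝ),
          Antitone l → (∀ i, 0 < l i) →
          (∀ i : Fin (min n p),
            κ₁ * ((i : ℕ) + 1 : ℝ) ^ (-ν) ≤ l i ∧ l i ≤ κ₂ * ((i : ℕ) + 1 : ℝ) ^ (-ν)) →
          c * (n : ℝ) ^ ((θ - ν) / ν)
              ≤ (n : ℝ)⁻¹ * ∑ i, (l i / (l i + (n : ℝ) ^ (-θ))) ^ 2 ∧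
            (n : ℝ)⁻¹ * ∑ i, (l i / (l i + (n : ℝ) ^ (-θ))) ^ 2
              ≤ C * (n : ℝ) ^ ((θ - ν) / ν) := by
  have hν0 : 0 < ν := by linarith
  set b := κ₁ ^ (1 / ν)
  have hb : 0 < b := by positivity
  have h2ν : 0 < 2 * ν - 1 := by linarith
  refine ⟨min (min 1 k₃) (b / 2) / 4, 2 * ν / (2 * ν - 1) * κ₂ ^ (1 / ν) + 1, by positivity,
    by positivity, max 1 ⌈b⁻¹ ^ (ν / θ)⌉₊, le_max_left _ _, ?_⟩
  intro n p hn hpl _ l _ hl hlκ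
  have hn1 : (1 : ℝ) ≤ n := by exact_mod_cast (le_max_left _ _).trans hn
  have hn0 : (0 : ℝ) < n := by linarith
  set X := (n : ℝ) ^ (θ / ν)
  have hX1 : 1 ≤ X := one_le_rpow hn1 (by positivity)
  have hXn : X ≤ n := rpow_le_self_of_one_le hn1 ((div_le_one hν0).mpr hθν)
  have hbX : 1 ≤ b * X := one_le_mul_rpow_div_of_inv_rpow_le hb hθ hν0
    ((Nat.le_ceil _).trans (by exact_mod_cast (le_max_right _ _).trans hn))
  have hscale : ∀ κ > 0, ∀ i : Fin (min n p),
      (n : ℝ) ^ (-θ) * (κ ^ (1 / ν) * X / ((i : ℕ) + 1)) ^ ν = κ * ((i : ℕ) + 1 : ℝ) ^ (-ν) :=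
    fun κ hκ i => rpow_neg_mul_div_rpow_eq hκ hν0.ne' hn0 (by positivity)
  have hlower := min_floor_div_four_le_sum_sq_div_add l hν0.le (by positivity)
    fun i => (hscale κ₁ hκ₁ i).trans_le (hlκ i).1
  have hupper := sum_sq_div_add_le l hν (by positivity) (by positivity) hl
    fun i => (hlκ i).2.trans_eq (hscale κ₂ hκ₂ i).symm
  have hcount : min (min 1 k₃) (b / 2) * X ≤ ((min (min n p) ⌊b * X⌋₊ : ℕ) : ℝ) := by
    push_cast
    refine le_min (le_min ?_ ?_) ?_
    · nlinarith [min_le_left (min 1 k₃) (b / 2), min_le_left 1 k₃]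
    · nlinarith [min_le_left (min 1 k₃) (b / 2), min_le_right 1 k₃]
    · nlinarith [min_le_right (min 1 k₃) (b / 2), half_le_natFloor hbX]
  refine ⟨?_, ?_⟩ <;> rw [rpow_sub_self_div_self hn0 θ hν0.ne', mul_left_comm _ (n : ℝ)⁻¹] <;>
    gcongr
  · linarith
  · nlinarith

/-- **Ridge variance sum rate for fast eigenvalue decay** (`ν > 1/2`):
`(1/n)·∑_{i=1}^{min(n,p)} (l_i/(l_i+n^{−θ}))² ≍ n^{(θ−ν)/ν}`. -/
theorem ridge_variance_sum_rate_fast_decay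
    (κ₁ κ₂ ν θ k₃ k₄ : ℝ)
    (hκ₁ : 0 < κ₁) (hκ₂ : 0 < κ₂) (hν : 1 / 2 < ν) (hθ : 0 < θ) (hθν : θ ≤ ν)
    (hk₃ : 0 < k₃) (hk₄ : k₃ ≤ k₄) :
    ∃ c C : ℝ, 0 < c ∧ 0 < C ∧ ∃ n₀ : ℕ, 1 ≤ n₀ ∧
      ∀ (n p : ℕ), n₀ ≤ n →
        k₃ * (n : ℝ) ≤ (p : ℝ) → (p : ℝ) ≤ k₄ * (n : ℝ) →
        ∀ (l : Fin (min n p) → ℝ),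
          Antitone l → (∀ i, 0 < l i) →
          (∀ i : Fin (min n p),
            κ₁ * ((i : ℕ) + 1 : ℝ) ^ (-ν) ≤ l i ∧ l i ≤ κ₂ * ((i : ℕ) + 1 : ℝ) ^ (-ν)) →
          c * (n : ℝ) ^ ((θ - ν) / ν)
              ≤ (n : ℝ)⁻¹ * ∑ i, (l i / (l i + (n : ℝ) ^ (-θ))) ^ 2 ∧
            (n : ℝ)⁻¹ * ∑ i, (l i / (l i + (n : ℝ) ^ (-θ))) ^ 2
              ≤ C * (n : ℝ) ^ ((θ - ν) / ν) :=
  ridge_variance_sum_rate_fast_decay_general κ₁ κ₂ ν θ k₃ k₄ hκ₁ hκ₂ hν hθ hθν hk₃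
end

section
/- Ridge variance sum rate for slow eigenvalue decay: Let ν ∈ (0,1/2), 0 < θ < ν, and let l₁ ≥ l₂ ≥ … ≥ l_m > 0 with m = min(n,p) and k₃ n ≤ p ≤ k₄ n, satisfy κ₁ i^{-ν} ≤ l_i ≤ κ₂ i^{-ν} for all i = 1,…,m (constants κ₁, κ₂ > 0, 0 < k₃ ≤ k₄). Then there exist a constant C > 0 and n₀ ≥ 1 depending only on (κ₁, κ₂, ν, θ, k₃, k₄) such that for all n ≥ n₀: (1/n)·∑_{i=1}^{m} ( l_i / (l_i + n^{-θ}) )² ≤ C·( n^{(θ−ν)/ν} + n^{2(θ−ν)} ). -/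
/-!
Bounding the shrinkage factor `l / (l + n^{-θ})` by `l · n^θ ≤ κ₂ i^{-ν} n^θ` reduces the sum to
`κ₂² n^{2θ} ∑_{i ≤ n} i^{-2ν}`. Since `2ν < 1`, Bernoulli's inequality for the concave power
`x ↦ x^{1-2ν}` telescopes this partial sum to at most `n^{1-2ν} / (1 - 2ν)`, so the whole
expression is `O(n^{2(θ-ν)})`.
-/

open Real Finset

lemma mul_add_one_rpow_sub_one_le {x s : ℝ} (hx : 0 ≤ x) (hs : 0 ≤ s) (hs1 : s ≤ 1) :
    s * (x + 1) ^ (s - 1) ≤ (x + 1) ^ s - x ^ s := by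
  have hx1 : 0 < x + 1 := by linarith
  have bernoulli := rpow_one_add_le_one_add_mul_self
    (neg_le_neg (inv_le_one_of_one_le₀ (by linarith : (1 : ℝ) ≤ x + 1))) hs hs1
  have hbase : 1 + -(x + 1)⁻¹ = x / (x + 1) := by field_simp; ring
  rw [hbase, div_rpow hx hx1.le, div_le_iff₀ (rpow_pos_of_pos hx1 s)] at bernoulli
  rw [rpow_sub_one hx1.ne']
  linarith [show (1 + s * -(x + 1)⁻¹) * (x + 1) ^ s = (x + 1) ^ s - s * ((x + 1) ^ s / (x + 1))
    by ring]

lemma sum_range_add_one_rpow_neg_le {a : ℝ} (ha : 0 ≤ a) (ha1 : a < 1) (m : ℕ) :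
    ∑ i ∈ range m, ((i : ℝ) + 1) ^ (-a) ≤ (m : ℝ) ^ (1 - a) / (1 - a) := by
  have hs : 0 < 1 - a := by linarith
  rw [le_div_iff₀ hs, sum_mul]
  calc ∑ i ∈ range m, ((i : ℝ) + 1) ^ (-a) * (1 - a)
      ≤ ∑ i ∈ range m, (((i : ℝ) + 1) ^ (1 - a) - (i : ℝ) ^ (1 - a)) := by
        gcongr with i
        have := mul_add_one_rpow_sub_one_le (Nat.cast_nonneg i) hs.le (by linarith)
        rwa [sub_sub_cancel_left, mul_comm] at this
    _ = (m : ℝ) ^ (1 - a) := by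
        simpa [zero_rpow hs.ne'] using sum_range_sub (fun i : ℕ => (i : ℝ) ^ (1 - a)) m

lemma sq_div_add_le_sq_div {l u t : ℝ} (hl : 0 ≤ l) (ht : 0 < t) (hlu : l ≤ u) :
    (l / (l + t)) ^ 2 ≤ (u / t) ^ 2 :=
  pow_le_pow_left₀ (by positivity)
    ((div_le_div_of_nonneg_left hl ht (by linarith)).trans (div_le_div_of_nonneg_right hlu ht.le)) 2

lemma sum_sq_div_add_le_of_le_rpow_neg {m : ℕ} {l : Fin m → ℝ} {κ ν t : ℝ} (hν : 0 ≤ ν)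
    (hν' : ν < 1 / 2) (ht : 0 < t) (hl : ∀ i, 0 ≤ l i)
    (hlκ : ∀ i : Fin m, l i ≤ κ * ((i : ℕ) + 1 : ℝ) ^ (-ν)) :
    ∑ i, (l i / (l i + t)) ^ 2 ≤ κ ^ 2 / (1 - 2 * ν) * (m : ℝ) ^ (1 - 2 * ν) / t ^ 2 := by
  calc ∑ i, (l i / (l i + t)) ^ 2
      ≤ ∑ i : Fin m, (κ * ((i : ℕ) + 1 : ℝ) ^ (-ν) / t) ^ 2 :=
        sum_le_sum fun i _ => sq_div_add_le_sq_div (hl i) ht (hlκ i)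
    _ = κ ^ 2 / t ^ 2 * ∑ i ∈ range m, ((i : ℝ) + 1) ^ (-(2 * ν)) := by
        rw [Fin.sum_univ_eq_sum_range (fun i => (κ * ((i : ℝ) + 1) ^ (-ν) / t) ^ 2), mul_sum]
        refine sum_congr rfl fun i _ => ?_
        rw [div_pow, mul_pow, ← rpow_mul_natCast (by positivity)]
        ring_nf
    _ ≤ κ ^ 2 / t ^ 2 * ((m : ℝ) ^ (1 - 2 * ν) / (1 - 2 * ν)) := by
        gcongr
        exact sum_range_add_one_rpow_neg_le (by positivity) (by linarith) m
    _ = κ ^ 2 / (1 - 2 * ν) * (m : ℝ) ^ (1 - 2 * ν) / t ^ 2 := by ring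

theorem ridge_variance_sum_rate_slow_decay_general
    (κ₁ κ₂ ν θ k₃ k₄ : ℝ)
    (hκ₂ : 0 < κ₂) (hν : 0 < ν) (hν' : ν < 1 / 2) :
    ∃ C : ℝ, 0 < C ∧ ∃ n₀ : ℕ, 1 ≤ n₀ ∧
      ∀ (n p : ℕ), n₀ ≤ n →
        k₃ * (n : ℝ) ≤ (p : ℝ) → (p : ℝ) ≤ k₄ * (n : ℝ) →
        ∀ (l : Fin (min n p) → ℝ),
          Antitone l → (∀ i, 0 < l i) →
          (∀ i : Fin (min n p),
            κ₁ * ((i : ℕ) + 1 : ℝ) ^ (-ν) ≤ l i ∧ l i ≤ κ₂ * ((i : ℕ) + 1 : ℝ) ^ (-ν)) →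
          (n : ℝ)⁻¹ * ∑ i, (l i / (l i + (n : ℝ) ^ (-θ))) ^ 2
            ≤ C * ((n : ℝ) ^ ((θ - ν) / ν) + (n : ℝ) ^ (2 * (θ - ν))) := by
  have hs : 0 < 1 - 2 * ν := by linarith
  refine ⟨κ₂ ^ 2 / (1 - 2 * ν), by positivity, 1, le_rfl, ?_⟩
  intro n p hn _ _ l _ hl hlκ
  have hn0 : (0 : ℝ) < n := by exact_mod_cast hn
  have hsum := sum_sq_div_add_le_of_le_rpow_neg hν.le hν' (rpow_pos_of_pos hn0 (-θ))
    (fun i => (hl i).le) (fun i => (hlκ i).2)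
  have hmin : ((min n p : ℕ) : ℝ) ^ (1 - 2 * ν) ≤ (n : ℝ) ^ (1 - 2 * ν) :=
    rpow_le_rpow (by positivity) (by exact_mod_cast min_le_left n p) hs.le
  have hexp : (n : ℝ)⁻¹ * ((n : ℝ) ^ (1 - 2 * ν) / ((n : ℝ) ^ (-θ)) ^ 2)
      = (n : ℝ) ^ (2 * (θ - ν)) := by
    rw [← rpow_neg_one, ← rpow_mul_natCast hn0.le, ← rpow_sub hn0, ← rpow_add hn0]
    ring_nf
  calc (n : ℝ)⁻¹ * ∑ i, (l i / (l i + (n : ℝ) ^ (-θ))) ^ 2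
      ≤ (n : ℝ)⁻¹ * (κ₂ ^ 2 / (1 - 2 * ν) * (n : ℝ) ^ (1 - 2 * ν) / ((n : ℝ) ^ (-θ)) ^ 2) := by
        gcongr
        exact hsum.trans (by gcongr)
    _ = κ₂ ^ 2 / (1 - 2 * ν) * (n : ℝ) ^ (2 * (θ - ν)) := by rw [← hexp]; ring
    _ ≤ κ₂ ^ 2 / (1 - 2 * ν) * ((n : ℝ) ^ ((θ - ν) / ν) + (n : ℝ) ^ (2 * (θ - ν))) := by
        gcongr
        exact le_add_of_nonneg_left (by positivity)

/-- **Ridge variance sum rate for slow eigenvalue decay** (`ν ∈ (0,1/2)`):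
`(1/n)·∑_{i=1}^{min(n,p)} (l_i/(l_i+n^{−θ}))² ≲ n^{(θ−ν)/ν} + n^{2(θ−ν)}`. -/
theorem ridge_variance_sum_rate_slow_decay
    (κ₁ κ₂ ν θ k₃ k₄ : ℝ)
    (hκ₁ : 0 < κ₁) (hκ₂ : 0 < κ₂) (hν : 0 < ν) (hν' : ν < 1 / 2)
    (hθ : 0 < θ) (hθν : θ < ν)
    (hk₃ : 0 < k₃) (hk₄ : k₃ ≤ k₄) :
    ∃ C : ℝ, 0 < C ∧ ∃ n₀ : ℕ, 1 ≤ n₀ ∧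
      ∀ (n p : ℕ), n₀ ≤ n →
        k₃ * (n : ℝ) ≤ (p : ℝ) → (p : ℝ) ≤ k₄ * (n : ℝ) →
        ∀ (l : Fin (min n p) → ℝ),
          Antitone l → (∀ i, 0 < l i) →
          (∀ i : Fin (min n p),
            κ₁ * ((i : ℕ) + 1 : ℝ) ^ (-ν) ≤ l i ∧ l i ≤ κ₂ * ((i : ℕ) + 1 : ℝ) ^ (-ν)) →
          (n : ℝ)⁻¹ * ∑ i, (l i / (l i + (n : ℝ) ^ (-θ))) ^ 2
            ≤ C * ((n : ℝ) ^ ((θ - ν) / ν) + (n : ℝ) ^ (2 * (θ - ν))) :=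
  ridge_variance_sum_rate_slow_decay_general κ₁ κ₂ ν θ k₃ k₄ hκ₂ hν hν'
end

section
/- Deterministic ridge bias bound: Let X ∈ ℝ^{n×p} be any matrix, ρ > 0, and set B = I_p − (XᵀX + ρ I_p)^{-1} XᵀX. Then the operator norm of the positive semidefinite matrix B (XᵀX) B is at most ρ/4; consequently, for every β ∈ ℝ^p, βᵀ B (XᵀX) B β ≤ (ρ/4)·‖β‖₂². -/
/-!
With `S = (XᵀX + ρI)⁻¹` one has `S XᵀX = I - ρS`, so the bias matrix is `B = ρS` and
`(ρ/4) I - B XᵀX B = (ρ/4) C²` with `C = I - 2ρS` symmetric: this is the matrix form of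
`ρ²λ/(λ+ρ)² ≤ ρ/4`. Writing `B XᵀX B = (XB)ᵀ(XB)`, the C⋆-identity `‖YᵀY‖ = ‖Y‖²` turns this
quadratic-form bound into the operator-norm bound.
-/

open Matrix

/-- The ℓ₂→ℓ₂ operator (spectral) norm of a square real matrix. -/
noncomputable def l2OpNorm {p : ℕ} (M : Matrix (Fin p) (Fin p) ℝ) : ℝ :=
  ‖(Matrix.toEuclideanCLM (𝕜 := ℝ) M)‖

open scoped Matrix.Norms.L2Operator

lemma quarter_smul_one_sub_bias_mul_mul_bias {R : Type*} [Ring R] [Algebra ℝ R] {S A : R}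
    {ρ : ℝ} (h : S * A = 1 - ρ • S) :
    (ρ / 4) • 1 - (1 - S * A) * A * (1 - S * A)
      = (ρ / 4) • ((1 - (2 * ρ) • S) * (1 - (2 * ρ) • S)) := by
  have hSAS : S * A * S = S - ρ • (S * S) := by rw [h, sub_mul, one_mul, smul_mul_assoc]
  rw [h, sub_sub_cancel, smul_mul_assoc, smul_mul_assoc, mul_smul_comm, hSAS]
  simp only [mul_sub, sub_mul, smul_mul_assoc, mul_smul_comm, smul_smul, smul_sub, mul_one,
    one_mul]
  match_scalars <;> ring

namespace Matrix

variable {m n : Type*} [Fintype m] [Fintype n] [DecidableEq n]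

lemma inv_add_smul_one_mul_self {K : Type*} [CommRing K] {A : Matrix n n K} {c : K}
    (h : IsUnit (A + c • 1).det) : (A + c • 1)⁻¹ * A = 1 - c • (A + c • 1)⁻¹ := by
  have h_inv := nonsing_inv_mul _ h
  rw [mul_add, mul_smul_comm, mul_one] at h_inv
  exact eq_sub_of_add_eq h_inv

omit [DecidableEq n] in
lemma IsHermitian.posSemidef_mul_self {R : Type*} [Ring R] [PartialOrder R] [StarRing R]
    [StarOrderedRing R] {C : Matrix n n R} (hC : C.IsHermitian) :
    (C * C).PosSemidef := by
  simpa only [hC.eq] using posSemidef_conjTranspose_mul_self C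

lemma dotProduct_mulVec_le_of_posSemidef_smul_one_sub {M : Matrix n n ℝ} {c : ℝ}
    (h : (c • 1 - M).PosSemidef) (x : n → ℝ) : x ⬝ᵥ M *ᵥ x ≤ c * (x ⬝ᵥ x) := by
  have := h.dotProduct_mulVec_nonneg x
  rwa [star_trivial, sub_mulVec, smul_mulVec, one_mulVec, dotProduct_sub, dotProduct_smul,
    smul_eq_mul, sub_nonneg] at this

omit [DecidableEq n] in
lemma norm_toLp_mulVec_sq (Y : Matrix m n ℝ) (x : n → ℝ) :
    ‖WithLp.toLp 2 (Y *ᵥ x)‖ ^ 2 = x ⬝ᵥ (Yᴴ * Y) *ᵥ x := by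
  rw [← real_inner_self_eq_norm_sq, EuclideanSpace.inner_toLp_toLp, ← mulVec_mulVec,
    dotProduct_mulVec, conjTranspose_eq_transpose_of_trivial, vecMul_transpose, star_trivial]

lemma l2_opNorm_conjTranspose_mul_self_le {Y : Matrix m n ℝ} {c : ℝ} (hc : 0 ≤ c)
    (h : (c • 1 - Yᴴ * Y).PosSemidef) : ‖Yᴴ * Y‖ ≤ c := by
  have hY : ‖Y‖ ≤ √c := by
    rw [l2_opNorm_def]
    refine ContinuousLinearMap.opNorm_le_bound _ (Real.sqrt_nonneg c) fun x => ?_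
    refine (pow_le_pow_iff_left₀ (norm_nonneg _) (by positivity) two_ne_zero).mp ?_
    have hx : ‖x‖ ^ 2 = x.ofLp ⬝ᵥ x.ofLp := by
      rw [← real_inner_self_eq_norm_sq, EuclideanSpace.inner_eq_star_dotProduct, star_trivial]
    rw [mul_pow, Real.sq_sqrt hc, hx]
    exact (norm_toLp_mulVec_sq Y x.ofLp).trans_le
      (dotProduct_mulVec_le_of_posSemidef_smul_one_sub h x.ofLp)
  rw [l2_opNorm_conjTranspose_mul_self, ← Real.mul_self_sqrt hc]
  exact mul_self_le_mul_self (norm_nonneg _) hY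

end Matrix

/-- **Deterministic ridge bias bound.** With `B = I − (XᵀX+ρI)⁻¹XᵀX`, the PSD matrix
`B(XᵀX)B` has operator norm at most `ρ/4`; consequently `βᵀB(XᵀX)Bβ ≤ (ρ/4)‖β‖₂²`
for every `β`. -/
theorem ridge_bias_operator_norm_bound
    {n p : ℕ} (X : Matrix (Fin n) (Fin p) ℝ) (ρ : ℝ) (hρ : 0 < ρ) :
    (Matrix.PosSemidef
        ((((1 : Matrix (Fin p) (Fin p) ℝ)
            - (Xᵀ * X + ρ • (1 : Matrix (Fin p) (Fin p) ℝ))⁻¹ * (Xᵀ * X)) * (Xᵀ * X) *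
          ((1 : Matrix (Fin p) (Fin p) ℝ)
            - (Xᵀ * X + ρ • (1 : Matrix (Fin p) (Fin p) ℝ))⁻¹ * (Xᵀ * X))))) ∧
    l2OpNorm
        ((((1 : Matrix (Fin p) (Fin p) ℝ)
            - (Xᵀ * X + ρ • (1 : Matrix (Fin p) (Fin p) ℝ))⁻¹ * (Xᵀ * X)) * (Xᵀ * X) *
          ((1 : Matrix (Fin p) (Fin p) ℝ)
            - (Xᵀ * X + ρ • (1 : Matrix (Fin p) (Fin p) ℝ))⁻¹ * (Xᵀ * X))))
      ≤ ρ / 4 ∧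
    ∀ β : Fin p → ℝ,
      β ⬝ᵥ ((((1 : Matrix (Fin p) (Fin p) ℝ)
            - (Xᵀ * X + ρ • (1 : Matrix (Fin p) (Fin p) ℝ))⁻¹ * (Xᵀ * X)) * (Xᵀ * X) *
          ((1 : Matrix (Fin p) (Fin p) ℝ)
            - (Xᵀ * X + ρ • (1 : Matrix (Fin p) (Fin p) ℝ))⁻¹ * (Xᵀ * X))) *ᵥ β)
        ≤ ρ / 4 * ∑ i, β i ^ 2 := by
  set A := Xᵀ * X
  set S := (A + ρ • 1)⁻¹
  set B := 1 - S * A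
  have hA : A.PosSemidef := by
    simpa only [conjTranspose_eq_transpose_of_trivial] using posSemidef_conjTranspose_mul_self X
  have hAρ : (A + ρ • 1).PosDef := PosDef.posSemidef_add hA (PosDef.one.smul hρ)
  have hSA : S * A = 1 - ρ • S :=
    inv_add_smul_one_mul_self ((isUnit_iff_isUnit_det _).mp hAρ.isUnit)
  have hS : S.IsHermitian := hAρ.isHermitian.inv
  have hB : Bᴴ = B := by
    have hBS : B = ρ • S := by rw [← sub_sub_cancel 1 (ρ • S), ← hSA]
    rw [hBS, conjTranspose_smul, hS.eq, star_trivial]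
  have hgram : B * A * B = (X * B)ᴴ * (X * B) := by
    rw [conjTranspose_mul, hB, conjTranspose_eq_transpose_of_trivial]
    simp only [A, Matrix.mul_assoc]
  have hle : ((ρ / 4) • 1 - B * A * B).PosSemidef := by
    rw [quarter_smul_one_sub_bias_mul_mul_bias hSA]
    refine IsHermitian.posSemidef_mul_self ?_ |>.smul (by positivity)
    exact isHermitian_one.sub (hS.smul (.all _))
  refine ⟨?_, ?_, fun β => ?_⟩
  · rw [hgram]
    exact posSemidef_conjTranspose_mul_self _
  · rw [hgram] at hle ⊢
    exact l2_opNorm_conjTranspose_mul_self_le (by positivity) hle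
  · simpa only [dotProduct, sq] using dotProduct_mulVec_le_of_posSemidef_smul_one_sub hle β
end
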